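/- arXiv:2404.12647 — 2 statements merged into one kernel-verified Lean document; each statement's English description precedes it below -/
import Mathlib

section
/- (Moment bound for the PF twirl on distinct basis states) Let P be a uniformly random permutation operator on C^d and F a uniformly random binary phase operator, independent. For distinct tuples x, y ∈ [d]^t, E_{P,F} [(PF)^{⊗t} |x⟩⟨y| (PF)^{⊗t,†}] equals Λ R_σ / Tr[Λ] if y = x_σ for some σ ∈ S_t, and 0 otherwise. -/
/-- The projector `Λ` onto the distinct-tuple subspace of `(ℂ^d)^{⊗t}`. -/
def distinctProj (d t : ℕ) : Matrix (Fin t → Fin d) (Fin t → Fin d) ℂ :=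
  Matrix.of fun a b => if a = b ∧ Function.Injective a then 1 else 0

/-- The representation `R_σ` of `S_t` on `(ℂ^d)^{⊗t}` permuting tensor factors:
`R_σ |b⟩ = |b ∘ σ⁻¹⟩`. -/
def permOp (d t : ℕ) (σ : Equiv.Perm (Fin t)) :
    Matrix (Fin t → Fin d) (Fin t → Fin d) ℂ :=
  Matrix.of fun a b => if a = fun i => b (σ.symm i) then 1 else 0

/-!
Average over the phases first. As a function of `f`, the phase `(-1)^{Σ_i f(x_i) + f(y_i)}`
is the character of `{0,1}^d` indexed by the symmetric difference of `range x` and `range y`,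
so it sums to `2^d` if the two ranges coincide, i.e. if `y = x ∘ σ` for some `σ`, and to `0`
otherwise. In the surviving case, the `(a, b)` entry of `Σ_π |π∘x⟩⟨π∘x∘σ|` is
`[a injective, b = a∘σ]` times the number of permutations of `[d]` sending `x` to `a`; these are
the bijections between the complements of `range x` and `range a`, so there are `(d - t)!` of
them, and `(d - t)!/d! = 1/Tr Λ`.
-/

open Function Finset

section PhaseSum

variable {R α : Type*} [CommRing R] [DecidableEq α]

lemma sum_prod_neg_one_pow_boole_mul [Fintype α] (A B : Finset α) :
    ∑ f : α → Bool, (∏ z ∈ A, (-1 : R) ^ (if f z then 1 else 0)) *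
        ∏ z ∈ B, (-1 : R) ^ (if f z then 1 else 0)
      = if A = B then 2 ^ Fintype.card α else 0 := by
  let g (z : α) (b : Bool) : R := (if z ∈ A then (-1 : R) ^ (if b then 1 else 0) else 1) *
      (if z ∈ B then (-1 : R) ^ (if b then 1 else 0) else 1)
  have hfactor (z : α) : ∑ b, g z b = if (z ∈ A ↔ z ∈ B) then 2 else 0 := by
    rw [Fintype.sum_bool]
    by_cases hA : z ∈ A <;> by_cases hB : z ∈ B <;> simp only [g, hA, hB, if_true, if_false] <;>
      norm_num
  calc _ = ∑ f : α → Bool, ∏ z, g z (f z) := by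
          simp only [g, Finset.prod_mul_distrib, Fintype.prod_ite_mem]
    _ = _ := by
      simp only [← Fintype.prod_sum g, hfactor, Fintype.prod_ite_zero, Finset.prod_const,
        Finset.card_univ, ← Finset.ext_iff]

lemma neg_one_pow_sum_boole_comp {ι : Type*} [Fintype ι] (f : α → Bool) {x : ι → α}
    (hx : Injective x) :
    (-1 : R) ^ (∑ i, if f (x i) then 1 else 0) =
      ∏ z ∈ univ.image x, (-1 : R) ^ (if f z then 1 else 0) := by
  rw [← Finset.prod_pow_eq_pow_sum, Finset.prod_image hx.injOn]

lemma sum_neg_one_pow_sum_boole_add [Fintype α] {ι : Type*} [Fintype ι] {x y : ι → α}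
    (hx : Injective x) (hy : Injective y) :
    ∑ f : α → Bool,
        (-1 : R) ^ (∑ i, ((if f (x i) then 1 else 0) + (if f (y i) then 1 else 0)))
      = if Set.range x = Set.range y then 2 ^ Fintype.card α else 0 := by
  simp only [Finset.sum_add_distrib, pow_add, neg_one_pow_sum_boole_comp _ hx,
    neg_one_pow_sum_boole_comp _ hy, sum_prod_neg_one_pow_boole_mul, ← Finset.coe_inj,
    Finset.coe_image, Finset.coe_univ, Set.image_univ]

end PhaseSum

lemma Function.Injective.exists_perm_comp_eq_iff {α ι : Type*} {x y : ι → α}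
    (hx : Injective x) (hy : Injective y) :
    (∃ σ : Equiv.Perm ι, y = x ∘ σ) ↔ Set.range x = Set.range y := by
  constructor
  · rintro ⟨σ, rfl⟩
    exact (EquivLike.range_comp x σ).symm
  · intro h
    refine ⟨(Equiv.ofInjective y hy).trans
      ((Equiv.setCongr h.symm).trans (Equiv.ofInjective x hx).symm), ?_⟩
    funext i
    exact (Equiv.apply_ofInjective_symm hx ⟨y i, h ▸ ⟨i, rfl⟩⟩).symm

lemma card_perm_comp_eq_of_injective {α ι : Type*} [Fintype α] [DecidableEq α] [Fintype ι]
    {x a : ι → α} (hx : Injective x) (ha : Injective a) :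
    Fintype.card {π : Equiv.Perm α // ⇑π ∘ x = a} =
      (Fintype.card α - Fintype.card ι).factorial := by
  classical
  let g : Set.range x ≃ Set.range a :=
    (Equiv.ofInjective x hx).symm.trans (Equiv.ofInjective a ha)
  have hg (i : ι) : (g ⟨x i, Set.mem_range_self i⟩ : α) = a i := by simp [g]
  have hcard_compl {y : ι → α} (hy : Injective y) :
      Fintype.card ↥(Set.range y)ᶜ = Fintype.card α - Fintype.card ι := by
    rw [Fintype.card_compl_set, Set.card_range_of_injective hy]
  let e : {π : Equiv.Perm α // ⇑π ∘ x = a} ≃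
      {π : Equiv.Perm α // ∀ z : Set.range x, π z = g z} :=
    Equiv.subtypeEquivRight fun π =>
      ⟨by rintro rfl ⟨_, i, rfl⟩; exact (hg i).symm, fun h => funext fun i => (h _).trans (hg i)⟩
  rw [Fintype.card_congr (e.trans (Equiv.Set.compl g)),
    Fintype.card_equiv (Fintype.equivOfCardEq ((hcard_compl hx).trans (hcard_compl ha).symm)),
    hcard_compl hx]

open scoped Classical in
lemma sum_perm_single_comp_apply {R α ι : Type*} [Semiring R] [Fintype α] [DecidableEq α]
    [Fintype ι] {x : ι → α} (hx : Injective x) (σ : Equiv.Perm ι) (a b : ι → α) :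
    (∑ π : Equiv.Perm α, Matrix.single (fun i => π (x i)) (fun i => π (x (σ i))) (1 : R)) a b
      = if Injective a ∧ b = a ∘ σ then ((Fintype.card α - Fintype.card ι).factorial : R)
        else 0 := by
  have hentry (π : Equiv.Perm α) :
      Matrix.single (fun i => π (x i)) (fun i => π (x (σ i))) (1 : R) a b
        = if b = a ∘ σ ∧ ⇑π ∘ x = a then 1 else 0 := by
    rw [Matrix.single_apply]
    refine if_congr ⟨?_, ?_⟩ rfl rfl <;> rintro ⟨rfl, rfl⟩ <;> exact ⟨rfl, rfl⟩
  simp only [Matrix.sum_apply, hentry]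
  by_cases hb : b = a ∘ σ
  · simp only [hb, true_and, and_true, Finset.sum_boole]
    split_ifs with ha
    · rw [← Fintype.card_subtype, card_perm_comp_eq_of_injective hx ha]
    · rw [Finset.card_eq_zero.mpr, Nat.cast_zero]
      exact Finset.filter_false_of_mem fun π _ hπ => ha (hπ ▸ π.injective.comp hx)
  · simp [hb]

lemma distinctProj_mul_permOp_apply (d t : ℕ) (σ : Equiv.Perm (Fin t)) (a b : Fin t → Fin d) :
    (distinctProj d t * permOp d t σ) a b = if Injective a ∧ b = a ∘ σ then 1 else 0 := by
  rw [Matrix.mul_apply, Finset.sum_eq_single a]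
  · simp only [distinctProj, permOp, Matrix.of_apply, true_and]
    rw [ite_zero_mul_ite_zero, one_mul]
    exact if_congr (and_congr_right' ((Equiv.eq_comp_symm σ a b).trans eq_comm)) rfl rfl
  · intro c _ hca
    simp [distinctProj, Ne.symm hca]
  · simp

/-- PF twirl on distinct basis states: for independent uniformly random
`π ∈ S_d` (permutation operator `P`) and uniformly random Boolean `f` (phase operator `F`),
and distinct tuples `x, y ∈ [d]^t`, the average
`E_{P,F} (PF)^{⊗t} |x⟩⟨y| (PF)^{⊗t,†}` equals `Λ R_σ / Tr[Λ]` if `y = x_σ` for some `σ ∈ S_t`,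
and `0` otherwise.  (`(PF)^{⊗t}|z⟩ = (−1)^{Σ_i f(z_i)} |π∘z⟩`, `Tr Λ = d!/(d−t)!`.) -/
theorem stmt_15 (d t : ℕ) (x y : Fin t → Fin d)
    (hx : Function.Injective x) (hy : Function.Injective y)
    (M : Matrix (Fin t → Fin d) (Fin t → Fin d) ℂ)
    (hM : M = ((d.factorial : ℂ) * 2 ^ d)⁻¹ •
      ∑ π : Equiv.Perm (Fin d), ∑ f : Fin d → Bool,
        ((-1 : ℂ) ^ (∑ i, ((if f (x i) then 1 else 0) + (if f (y i) then 1 else 0)))) •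
          Matrix.single (fun i => π (x i)) (fun i => π (y i)) (1 : ℂ)) :
    (∀ σ : Equiv.Perm (Fin t), y = x ∘ ⇑σ →
        M = ((d.factorial / (d - t).factorial : ℕ) : ℂ)⁻¹ •
          (distinctProj d t * permOp d t σ))
    ∧ ((¬ ∃ σ : Equiv.Perm (Fin t), y = x ∘ ⇑σ) → M = 0) := by
  classical
  have hM' : M = (if ∃ σ : Equiv.Perm (Fin t), y = x ∘ ⇑σ then (d.factorial : ℂ)⁻¹ else 0) •
      ∑ π : Equiv.Perm (Fin d), Matrix.single (fun i => π (x i)) (fun i => π (y i)) (1 : ℂ) := by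
    simp only [hM, ← Finset.sum_smul, sum_neg_one_pow_sum_boole_add hx hy, Fintype.card_fin,
      ← Finset.smul_sum, smul_smul, hx.exists_perm_comp_eq_iff hy]
    split_ifs
    · field_simp
    · simp
  refine ⟨fun σ hσ => ?_, fun h => by rw [hM', if_neg h, zero_smul]⟩
  rw [hM', if_pos ⟨σ, hσ⟩]
  subst hσ
  ext a b
  simp only [Matrix.smul_apply, smul_eq_mul, Function.comp_apply, sum_perm_single_comp_apply hx,
    distinctProj_mul_permOp_apply, Fintype.card_fin]
  have hfactorial : ((d - t).factorial : ℂ) ≠ 0 := Nat.cast_ne_zero.mpr (Nat.factorial_ne_zero _)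
  split_ifs
  · rw [Nat.cast_div (Nat.factorial_dvd_factorial (Nat.sub_le d t)) hfactorial]
    field_simp
  · simp
end

section
/- (Dimension ratio of the distinct subspace in a Weyl module) In the Schur–Weyl decomposition (C^d)^{⊗t} ≅ ⊕_λ W_λ ⊗ V_λ, write the distinct-subspace projector as Λ = ⊕_λ Λ^{(λ)}_{W_λ} ⊗ I_{V_λ}. Then Tr[Λ^{(λ)}_{W_λ}] = (dim V_λ / t!) · Tr[Λ], and consequently Tr[Λ^{(λ)}_{W_λ}] / dim(W_λ) = Tr[Λ] / Π_{(i,j)∈λ}(d + j − i) ≥ ((d−t)/(d+t))^t for every partition λ ⊢ t. -/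
open Matrix Nat

lemma distinctProj_eq_diagonal (d t : ℕ) :
    distinctProj d t = diagonal fun a => if Function.Injective a then 1 else 0 := by
  ext a b
  by_cases hab : a = b
  · subst hab; simp [distinctProj]
  · simp [distinctProj, hab]

lemma Function.Injective.comp_perm_eq_self_iff {α β : Type*} {a : α → β}
    (ha : Function.Injective a) {σ : Equiv.Perm α} : a ∘ σ = a ↔ σ = 1 := by
  refine ⟨fun h => Equiv.ext fun i => ha (congrFun h i), ?_⟩
  rintro rfl
  rfl

lemma card_injective_fin_fun (d t : ℕ) :
    Fintype.card {a : Fin t → Fin d // Function.Injective a} = d.descFactorial t := by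
  rw [Fintype.card_congr (Equiv.subtypeInjectiveEquivEmbedding _ _), Fintype.card_embedding_eq,
    Fintype.card_fin, Fintype.card_fin]

lemma trace_distinctProj_mul_permOp (d t : ℕ) (σ : Equiv.Perm (Fin t)) :
    trace (distinctProj d t * permOp d t σ) = if σ = 1 then (d.descFactorial t : ℂ) else 0 := by
  classical
  have hdiag (a : Fin t → Fin d) : (distinctProj d t * permOp d t σ) a a
      = if Function.Injective a ∧ σ = 1 then 1 else 0 := by
    by_cases ha : Function.Injective a
    · have hfixed : (a = fun i => a (σ.symm i)) ↔ σ = 1 := by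
        rw [eq_comm, ← inv_eq_one]
        exact ha.comp_perm_eq_self_iff
      simp [distinctProj_eq_diagonal, permOp, ha, hfixed]
    · simp [distinctProj_eq_diagonal, ha]
  simp only [trace, diag_apply, hdiag, ite_and]
  split_ifs
  · simp [Finset.sum_boole, ← card_injective_fin_fun, Fintype.card_subtype]
  · simp

lemma trace_distinctProj_mul_sum_smul_permOp {d t : ℕ} (f : Equiv.Perm (Fin t) → ℂ) :
    trace (distinctProj d t * ∑ π, f π • permOp d t π) = f 1 * d.descFactorial t := by
  simp [Matrix.mul_sum, trace_sum, trace_distinctProj_mul_permOp]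

lemma mul_factorial_eq_of_trace_isotypic {d t m v : ℕ}
    {P : Matrix (Fin t → Fin d) (Fin t → Fin d) ℂ} {χ : Equiv.Perm (Fin t) → ℂ} (hv : v ≠ 0)
    (hblock : ((m * v : ℕ) : ℂ) = trace (distinctProj d t * P))
    (hP : P = ((v : ℂ) / t !) • ∑ π, χ π⁻¹ • permOp d t π) (hχ : χ 1 = v) :
    m * t ! = v * d.descFactorial t := by
  rw [hP, Matrix.mul_smul, trace_smul, trace_distinctProj_mul_sum_smul_permOp, inv_one, hχ,
    smul_eq_mul] at hblock
  have hv' : (v : ℂ) ≠ 0 := by exact_mod_cast hv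
  have ht : (t ! : ℂ) ≠ 0 := by exact_mod_cast t.factorial_ne_zero
  apply Nat.cast_injective (R := ℂ)
  push_cast at hblock ⊢
  field_simp at hblock
  exact hblock

lemma div_eq_div_of_mul_eq_mul {K : Type*} [Field K] {a w v n c s : K} (hv : v ≠ 0) (hs : s ≠ 0)
    (ha : a * s = v * n) (hw : w * s = v * c) : a / w = n / c := by
  rw [eq_div_of_mul_eq hs ha, eq_div_of_mul_eq hs hw]
  field_simp

lemma sub_pow_le_descFactorial {d t : ℕ} (htd : t ≤ d) :
    ((d : ℝ) - t) ^ t ≤ d.descFactorial t := by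
  rw [← Nat.cast_sub htd]
  exact_mod_cast (Nat.pow_le_pow_left (by omega) t).trans (Nat.pow_sub_le_descFactorial d t)

/-- The Schur–Weyl data enters through hypotheses: `Part` indexes the partitions `λ ⊢ t`,
`dimW λ` and `dimV λ` are the dimensions of `W_λ` and `V_λ`, `trLamW λ = Tr[Λ^{(λ)}_{W_λ}]`,
`Pproj λ` is the projector onto `W_λ ⊗ V_λ` with `χ λ` the character of `V_λ`, and
`contentProd λ = Π_{(i,j)∈λ}(d+j−i)`. The number `d!/(d-t)!` is `Tr[Λ]`. -/
theorem stmt_19_general (d t : ℕ) (htd : t ≤ d)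
    (Part : Type*)
    (dimW dimV trLamW : Part → ℕ)
    (contentProd : Part → ℝ)
    (Pproj : Part → Matrix (Fin t → Fin d) (Fin t → Fin d) ℂ)
    (χ : Part → Equiv.Perm (Fin t) → ℂ)
    (hblock : ∀ lam, ((trLamW lam * dimV lam : ℕ) : ℂ)
        = Matrix.trace (distinctProj d t * Pproj lam))
    (hPproj : ∀ lam, Pproj lam
        = ((dimV lam : ℂ) / (t.factorial : ℂ)) •
            ∑ π : Equiv.Perm (Fin t), χ lam π⁻¹ • permOp d t π)
    (hχ : ∀ lam, χ lam 1 = (dimV lam : ℂ))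
    (hdimVpos : ∀ lam, 0 < dimV lam)
    (hWeyl : ∀ lam, (dimW lam : ℝ) * (t.factorial : ℝ) = (dimV lam : ℝ) * contentProd lam)
    (hcontentpos : ∀ lam, 0 < contentProd lam)
    (hcontentle : ∀ lam, contentProd lam ≤ ((d : ℝ) + t) ^ t)
    (lam : Part) :
    ((trLamW lam : ℝ) * (t.factorial : ℝ)
        = (dimV lam : ℝ) * ((d.factorial / (d - t).factorial : ℕ) : ℝ))
    ∧ (trLamW lam : ℝ) / (dimW lam : ℝ)
        = ((d.factorial / (d - t).factorial : ℕ) : ℝ) / contentProd lam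
    ∧ (((d : ℝ) - t) / ((d : ℝ) + t)) ^ t ≤ (trLamW lam : ℝ) / (dimW lam : ℝ) := by
  rw [← Nat.descFactorial_eq_div htd]
  have htrace : ((trLamW lam * t ! : ℕ) : ℝ) = (dimV lam * d.descFactorial t : ℕ) :=
    congrArg _ <| mul_factorial_eq_of_trace_isotypic (hdimVpos lam).ne' (hblock lam)
      (hPproj lam) (hχ lam)
  push_cast at htrace
  have hratio : (trLamW lam : ℝ) / dimW lam = d.descFactorial t / contentProd lam :=
    div_eq_div_of_mul_eq_mul (by exact_mod_cast (hdimVpos lam).ne')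
      (by exact_mod_cast t.factorial_ne_zero) htrace (hWeyl lam)
  refine ⟨htrace, hratio, ?_⟩
  rw [hratio, div_pow]
  exact div_le_div₀ (by positivity) (sub_pow_le_descFactorial htd) (hcontentpos lam)
    (hcontentle lam)

/-- dimension ratio of the distinct subspace in a Weyl module: in the
Schur–Weyl decomposition `(ℂ^d)^{⊗t} ≅ ⊕_λ W_λ ⊗ V_λ` the distinct-subspace projector has the
block form `Λ = ⊕_λ Λ^{(λ)}_{W_λ} ⊗ I_{V_λ}`.  The Schur–Weyl data is abstracted: `Part`
indexes the partitions `λ ⊢ t`; `dimW λ, dimV λ` are the dimensions of the Weyl and Specht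
modules; `trLamW λ = Tr[Λ^{(λ)}_{W_λ}]`, so that the block form gives
`trLamW λ ⋅ dimV λ = Tr[Λ ⋅ 1_{P_λ}]`; the isotypic projector satisfies the character formula
`1_{P_λ} = (dimV λ / t!) Σ_π χ_λ(π⁻¹) R_π` with `χ_λ(e) = dimV λ`; the Weyl dimension formula
reads `dimW λ ⋅ t! = dimV λ ⋅ Π_{(i,j)∈λ}(d+j−i)` with `Π_{(i,j)∈λ}(d+j−i) ≤ (d+t)^t`.
Conclusion: `Tr[Λ^{(λ)}] = (dimV λ / t!) ⋅ Tr[Λ]`, and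
`Tr[Λ^{(λ)}]/dim W_λ = Tr[Λ]/Π_{(i,j)∈λ}(d+j−i) ≥ ((d−t)/(d+t))^t`
(using `Tr[Λ] = d!/(d−t)!`). -/
theorem stmt_19 (d t : ℕ) (ht : 0 < t) (htd : t ≤ d)
    (Part : Type*) [Fintype Part]
    (dimW dimV trLamW : Part → ℕ)
    (contentProd : Part → ℝ)
    (Pproj : Part → Matrix (Fin t → Fin d) (Fin t → Fin d) ℂ)
    (χ : Part → Equiv.Perm (Fin t) → ℂ)
    (hblock : ∀ lam, ((trLamW lam * dimV lam : ℕ) : ℂ)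
        = Matrix.trace (distinctProj d t * Pproj lam))
    (hPproj : ∀ lam, Pproj lam
        = ((dimV lam : ℂ) / (t.factorial : ℂ)) •
            ∑ π : Equiv.Perm (Fin t), χ lam π⁻¹ • permOp d t π)
    (hχ : ∀ lam, χ lam 1 = (dimV lam : ℂ))
    (hdimVpos : ∀ lam, 0 < dimV lam)
    (hdimWpos : ∀ lam, 0 < dimW lam)
    (hWeyl : ∀ lam, (dimW lam : ℝ) * (t.factorial : ℝ) = (dimV lam : ℝ) * contentProd lam)
    (hcontentpos : ∀ lam, 0 < contentProd lam)
    (hcontentle : ∀ lam, contentProd lam ≤ ((d : ℝ) + t) ^ t)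
    (lam : Part) :
    ((trLamW lam : ℝ) * (t.factorial : ℝ)
        = (dimV lam : ℝ) * ((d.factorial / (d - t).factorial : ℕ) : ℝ))
    ∧ (trLamW lam : ℝ) / (dimW lam : ℝ)
        = ((d.factorial / (d - t).factorial : ℕ) : ℝ) / contentProd lam
    ∧ (((d : ℝ) - t) / ((d : ℝ) + t)) ^ t ≤ (trLamW lam : ℝ) / (dimW lam : ℝ) :=
  stmt_19_general d t htd Part dimW dimV trLamW contentProd Pproj χ hblock hPproj hχ hdimVpos hWeyl
    hcontentpos hcontentle lam
end
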